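/- Small-gain theorem (integral form): suppose two causal input–output maps satisfy ‖Σ₁(e)‖_{L₂[0,T]} ≤ γ₁‖e‖_{L₂[0,T]} + b₁ and ‖Σ₂(e)‖_{L₂[0,T]} ≤ γ₂‖e‖_{L₂[0,T]} + b₂ for all T, with γ₁γ₂ < 1. Then for the feedback interconnection u₁ = e₁ − Σ₂(y₂), y₁ = Σ₁(u₁), u₂ = e₂ + y₁, y₂ = Σ₂(u₂), the signals y₁, y₂ satisfy L₂ bounds of the form ‖y₁‖_{L₂[0,T]} ≤ (1 − γ₁γ₂)⁻¹(γ₁‖e₁‖ + γ₁γ₂‖e₂‖ + const) for all T. -/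
import Mathlib


open MeasureTheory

/-- Cauchy–Schwarz for integrals of real functions. -/
lemma my_cauchy_schwarz {α : Type*} [MeasurableSpace α] (μ : Measure α) (f g : α → ℝ)
    (hf : Integrable (fun x => f x ^ 2) μ) (hg : Integrable (fun x => g x ^ 2) μ)
    (hfg : Integrable (fun x => f x * g x) μ) :
    ∫ x, f x * g x ∂μ ≤ Real.sqrt (∫ x, f x ^ 2 ∂μ) * Real.sqrt (∫ x, g x ^ 2 ∂μ) := by
  set A := ∫ x, f x ^ 2 ∂μ with hAdef
  set B := ∫ x, g x ^ 2 ∂μ with hBdef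
  set C := ∫ x, f x * g x ∂μ with hCdef
  have hA : 0 ≤ A := integral_nonneg fun x => sq_nonneg _
  have hB : 0 ≤ B := integral_nonneg fun x => sq_nonneg _
  have key : ∀ lam : ℝ, 0 ≤ A * (lam * lam) + (2 * C) * lam + B := by
    intro lam
    have h1 : 0 ≤ ∫ x, (lam * f x + g x) ^ 2 ∂μ := integral_nonneg fun x => sq_nonneg _
    have e : ∫ x, (lam * f x + g x) ^ 2 ∂μ = A * (lam * lam) + (2 * C) * lam + B := by
      have h2 : (fun x => (lam * f x + g x) ^ 2)
          = fun x => (lam * lam) * f x ^ 2 + ((2 * lam) * (f x * g x) + g x ^ 2) := by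
        funext x; ring
      have i1 : ∫ x, (lam * lam) * f x ^ 2 + ((2 * lam) * (f x * g x) + g x ^ 2) ∂μ
          = (∫ x, (lam * lam) * f x ^ 2 ∂μ)
            + ∫ x, (2 * lam) * (f x * g x) + g x ^ 2 ∂μ :=
        integral_add (hf.const_mul _) ((hfg.const_mul _).add hg)
      have i2 : ∫ x, (2 * lam) * (f x * g x) + g x ^ 2 ∂μ
          = (∫ x, (2 * lam) * (f x * g x) ∂μ) + ∫ x, g x ^ 2 ∂μ :=
        integral_add (hfg.const_mul _) hg
      rw [h2, i1, i2, integral_const_mul _ _, integral_const_mul _ _]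
      ring
    linarith [e ▸ h1]
  have hd := discrim_le_zero key
  rw [discrim] at hd
  have h2 : C ^ 2 ≤ A * B := by nlinarith
  calc C ≤ |C| := le_abs_self _
    _ = Real.sqrt (C ^ 2) := (Real.sqrt_sq_eq_abs C).symm
    _ ≤ Real.sqrt (A * B) := Real.sqrt_le_sqrt h2
    _ = Real.sqrt A * Real.sqrt B := Real.sqrt_mul hA B

/-- Key triangle-type bound: if `0 ≤ h ≤ f + g` pointwise with `f, g ≥ 0` and `f², g²`
integrable, then the L² norm of `h` is at most that of `f` plus that of `g`. -/
lemma my_l2_triangle {α : Type*} [MeasurableSpace α] (μ : Measure α) (h f g : α → ℝ)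
    (hh : ∀ x, 0 ≤ h x) (hfp : ∀ x, 0 ≤ f x) (hgp : ∀ x, 0 ≤ g x)
    (hle : ∀ x, h x ≤ f x + g x)
    (hf : Integrable (fun x => f x ^ 2) μ) (hg : Integrable (fun x => g x ^ 2) μ) :
    Real.sqrt (∫ x, h x ^ 2 ∂μ) ≤
      Real.sqrt (∫ x, f x ^ 2 ∂μ) + Real.sqrt (∫ x, g x ^ 2 ∂μ) := by
  have hfm : AEStronglyMeasurable f μ := by
    have := Real.continuous_sqrt.comp_aestronglyMeasurable hf.aestronglyMeasurable
    refine this.congr (Filter.Eventually.of_forall fun x => ?_)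
    simp [Real.sqrt_sq (hfp x)]
  have hgm : AEStronglyMeasurable g μ := by
    have := Real.continuous_sqrt.comp_aestronglyMeasurable hg.aestronglyMeasurable
    refine this.congr (Filter.Eventually.of_forall fun x => ?_)
    simp [Real.sqrt_sq (hgp x)]
  have hfg : Integrable (fun x => f x * g x) μ := by
    refine Integrable.mono'
      ((hf.add hg : Integrable (fun x => f x ^ 2 + g x ^ 2) μ)) (hfm.mul hgm)
      (Filter.Eventually.of_forall fun x => ?_)
    have h1 : 0 ≤ f x * g x := mul_nonneg (hfp x) (hgp x)
    rw [Real.norm_of_nonneg h1]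
    simp only [Pi.add_apply]
    nlinarith [sq_nonneg (f x - g x)]
  set A := ∫ x, f x ^ 2 ∂μ
  set B := ∫ x, g x ^ 2 ∂μ
  have hA : 0 ≤ A := integral_nonneg fun x => sq_nonneg _
  have hB : 0 ≤ B := integral_nonneg fun x => sq_nonneg _
  have hcs := my_cauchy_schwarz μ f g hf hg hfg
  have hsum : Integrable (fun x => (f x + g x) ^ 2) μ := by
    have h2 : (fun x => (f x + g x) ^ 2)
        = fun x => f x ^ 2 + (2 * (f x * g x) + g x ^ 2) := by funext x; ring
    rw [h2]; exact hf.add ((hfg.const_mul _).add hg)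
  have hmono : ∫ x, h x ^ 2 ∂μ ≤ ∫ x, (f x + g x) ^ 2 ∂μ := by
    refine integral_mono_of_nonneg (Filter.Eventually.of_forall fun x => sq_nonneg _)
      hsum (Filter.Eventually.of_forall fun x => ?_)
    exact pow_le_pow_left₀ (hh x) (hle x) 2
  have hexp : ∫ x, (f x + g x) ^ 2 ∂μ = A + 2 * ∫ x, f x * g x ∂μ + B := by
    have h2 : (fun x => (f x + g x) ^ 2)
        = fun x => f x ^ 2 + (2 * (f x * g x) + g x ^ 2) := by funext x; ring
    have i1 : ∫ x, f x ^ 2 + (2 * (f x * g x) + g x ^ 2) ∂μ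
        = (∫ x, f x ^ 2 ∂μ) + ∫ x, 2 * (f x * g x) + g x ^ 2 ∂μ :=
      integral_add hf ((hfg.const_mul _).add hg)
    have i2 : ∫ x, 2 * (f x * g x) + g x ^ 2 ∂μ
        = (∫ x, 2 * (f x * g x) ∂μ) + ∫ x, g x ^ 2 ∂μ :=
      integral_add (hfg.const_mul _) hg
    rw [h2, i1, i2, integral_const_mul _ _]
    ring
  have hfin : ∫ x, h x ^ 2 ∂μ ≤ (Real.sqrt A + Real.sqrt B) ^ 2 := by
    have hA' : Real.sqrt A ^ 2 = A := Real.sq_sqrt hA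
    have hB' : Real.sqrt B ^ 2 = B := Real.sq_sqrt hB
    nlinarith [hmono, hexp, hcs]
  calc Real.sqrt (∫ x, h x ^ 2 ∂μ) ≤ Real.sqrt ((Real.sqrt A + Real.sqrt B) ^ 2) :=
        Real.sqrt_le_sqrt hfin
    _ = Real.sqrt A + Real.sqrt B := Real.sqrt_sq (by positivity)

/-- Small-gain theorem (integral form). Given two input–output maps with finite
L₂[0,T] gain bounds `γ₁, γ₂` (with biases `b₁, b₂`) holding for all horizons `T`
and all signals, and `γ₁γ₂ < 1`, the signals of the well-posed feedback
interconnection `u₁ = e₁ − y₂`, `y₁ = S₁(u₁)`, `u₂ = e₂ + y₁`, `y₂ = S₂(u₂)`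
satisfy `‖y₁‖_{L₂[0,T]} ≤ (1 − γ₁γ₂)⁻¹ (γ₁‖e₁‖ + γ₁γ₂‖e₂‖ + c)` for all `T`,
for some constant `c`. -/
theorem small_gain_theorem {p q : ℕ}
    (S₁ : (ℝ → EuclideanSpace ℝ (Fin p)) → (ℝ → EuclideanSpace ℝ (Fin q)))
    (S₂ : (ℝ → EuclideanSpace ℝ (Fin q)) → (ℝ → EuclideanSpace ℝ (Fin p)))
    (γ₁ γ₂ b₁ b₂ : ℝ) (hγ₁ : 0 ≤ γ₁) (hγ₂ : 0 ≤ γ₂) (hb₁ : 0 ≤ b₁) (hb₂ : 0 ≤ b₂)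
    (hsmall : γ₁ * γ₂ < 1)
    (hS₁ : ∀ (e : ℝ → EuclideanSpace ℝ (Fin p)) (T : ℝ),
      Real.sqrt (∫ t in (0:ℝ)..T, ‖S₁ e t‖ ^ 2) ≤
        γ₁ * Real.sqrt (∫ t in (0:ℝ)..T, ‖e t‖ ^ 2) + b₁)
    (hS₂ : ∀ (e : ℝ → EuclideanSpace ℝ (Fin q)) (T : ℝ),
      Real.sqrt (∫ t in (0:ℝ)..T, ‖S₂ e t‖ ^ 2) ≤
        γ₂ * Real.sqrt (∫ t in (0:ℝ)..T, ‖e t‖ ^ 2) + b₂)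
    (e₁ u₁ y₂ : ℝ → EuclideanSpace ℝ (Fin p))
    (e₂ u₂ y₁ : ℝ → EuclideanSpace ℝ (Fin q))
    (hu₁ : u₁ = e₁ - y₂) (hy₁ : y₁ = S₁ u₁)
    (hu₂ : u₂ = e₂ + y₁) (hy₂ : y₂ = S₂ u₂)
    (hint : ∀ T : ℝ, IntervalIntegrable (fun t => ‖e₁ t‖ ^ 2) volume 0 T ∧
      IntervalIntegrable (fun t => ‖e₂ t‖ ^ 2) volume 0 T ∧
      IntervalIntegrable (fun t => ‖y₁ t‖ ^ 2) volume 0 T ∧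
      IntervalIntegrable (fun t => ‖y₂ t‖ ^ 2) volume 0 T) :
    ∃ c : ℝ, 0 ≤ c ∧ ∀ T : ℝ, 0 ≤ T →
      Real.sqrt (∫ t in (0:ℝ)..T, ‖y₁ t‖ ^ 2) ≤
        (1 - γ₁ * γ₂)⁻¹ *
          (γ₁ * Real.sqrt (∫ t in (0:ℝ)..T, ‖e₁ t‖ ^ 2) +
           γ₁ * γ₂ * Real.sqrt (∫ t in (0:ℝ)..T, ‖e₂ t‖ ^ 2) + c) := by
  refine ⟨γ₁ * b₂ + b₁, by positivity, fun T hT => ?_⟩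
  obtain ⟨hie₁, hie₂, hiy₁, hiy₂⟩ := hint T
  set μT := volume.restrict (Set.Ioc (0:ℝ) T) with hμT
  have hconv : ∀ f : ℝ → ℝ, (∫ t in (0:ℝ)..T, f t) = ∫ t, f t ∂μT := fun f =>
    intervalIntegral.integral_of_le hT
  have hIe₁ : Integrable (fun t => ‖e₁ t‖ ^ 2) μT := hie₁.1
  have hIe₂ : Integrable (fun t => ‖e₂ t‖ ^ 2) μT := hie₂.1
  have hIy₁ : Integrable (fun t => ‖y₁ t‖ ^ 2) μT := hiy₁.1
  have hIy₂ : Integrable (fun t => ‖y₂ t‖ ^ 2) μT := hiy₂.1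
  set E₁ := Real.sqrt (∫ t in (0:ℝ)..T, ‖e₁ t‖ ^ 2) with hE₁
  set E₂ := Real.sqrt (∫ t in (0:ℝ)..T, ‖e₂ t‖ ^ 2) with hE₂
  set Y₁ := Real.sqrt (∫ t in (0:ℝ)..T, ‖y₁ t‖ ^ 2) with hY₁
  set Y₂ := Real.sqrt (∫ t in (0:ℝ)..T, ‖y₂ t‖ ^ 2) with hY₂
  have hu₁le : Real.sqrt (∫ t in (0:ℝ)..T, ‖u₁ t‖ ^ 2) ≤ E₁ + Y₂ := by
    rw [hE₁, hY₂, hconv, hconv, hconv]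
    refine my_l2_triangle μT (fun t => ‖u₁ t‖) (fun t => ‖e₁ t‖) (fun t => ‖y₂ t‖)
      (fun t => norm_nonneg _) (fun t => norm_nonneg _) (fun t => norm_nonneg _)
      (fun t => ?_) hIe₁ hIy₂
    rw [hu₁]
    exact norm_sub_le _ _
  have hu₂le : Real.sqrt (∫ t in (0:ℝ)..T, ‖u₂ t‖ ^ 2) ≤ E₂ + Y₁ := by
    rw [hE₂, hY₁, hconv, hconv, hconv]
    refine my_l2_triangle μT (fun t => ‖u₂ t‖) (fun t => ‖e₂ t‖) (fun t => ‖y₁ t‖)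
      (fun t => norm_nonneg _) (fun t => norm_nonneg _) (fun t => norm_nonneg _)
      (fun t => ?_) hIe₂ hIy₁
    rw [hu₂]
    exact norm_add_le _ _
  have h1 : Y₁ ≤ γ₁ * (E₁ + Y₂) + b₁ := by
    have := hS₁ u₁ T
    rw [← hy₁] at this
    exact this.trans (by nlinarith [mul_le_mul_of_nonneg_left hu₁le hγ₁])
  have h2 : Y₂ ≤ γ₂ * (E₂ + Y₁) + b₂ := by
    have := hS₂ u₂ T
    rw [← hy₂] at this
    exact this.trans (by nlinarith [mul_le_mul_of_nonneg_left hu₂le hγ₂])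
  have hD : 0 < 1 - γ₁ * γ₂ := by linarith
  rw [le_inv_mul_iff₀ hD]
  nlinarith [mul_le_mul_of_nonneg_left h2 hγ₁, Real.sqrt_nonneg (∫ t in (0:ℝ)..T, ‖y₁ t‖ ^ 2)]
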